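/- arXiv:1802.07253 — 4 statements merged into one kernel-verified Lean document; each statement's English description precedes it below -/
import Mathlib

section
/- If the weighted digraph with adjacency matrix A is strongly connected and at least one pinning gain b_i is strictly positive, then the matrix L + B is an irreducibly diagonally dominant matrix with nonpositive off-diagonal entries and, in particular, L + B is nonsingular (invertible). -/
/-!
Taussky's argument: if `M x = 0` with `x ≠ 0` and `M` is diagonally dominant, then in every row
`i` where `|x i|` is maximal the triangle inequality must be an equality, so row `i` is not
strictly dominant and `|x j|` is maximal as well whenever `M i j ≠ 0`. Irreducibility spreads
maximality to all indices, including a strictly dominant row, which is absurd.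

For `L + B`, row `i` has off-diagonal mass `∑_{j ≠ i} a_ij` and diagonal `∑_{j ≠ i} a_ij + b_i`,
so every row is dominant, a positive gain gives a strict row, and the nonzero off-diagonal
pattern of `L + B` is the edge set of the digraph.
-/

open Matrix Finset

namespace Matrix

variable {n : Type*} [Fintype n] [DecidableEq n]

section DiagonallyDominant

variable {K : Type*} [NormedField K] {M : Matrix n n K}

structure IrreduciblyDiagonallyDominant (M : Matrix n n K) : Prop where
  dominant : ∀ i, ∑ j ∈ univ.erase i, ‖M i j‖ ≤ ‖M i i‖
  exists_strict : ∃ i, ∑ j ∈ univ.erase i, ‖M i j‖ < ‖M i i‖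
  irreducible : ∀ i j, i ≠ j → Relation.TransGen (fun u v => M v u ≠ 0) i j

theorem norm_diag_mul_le_of_mulVec_apply_eq_zero {x : n → K} {i : n} (hx : (M *ᵥ x) i = 0) :
    ‖M i i‖ * ‖x i‖ ≤ ∑ j ∈ univ.erase i, ‖M i j‖ * ‖x j‖ := by
  have hrow : M i i * x i = -∑ j ∈ univ.erase i, M i j * x j := by
    rw [eq_neg_iff_add_eq_zero, add_sum_erase univ (fun j => M i j * x j) (mem_univ i)]
    exact hx
  calc ‖M i i‖ * ‖x i‖ = ‖∑ j ∈ univ.erase i, M i j * x j‖ := by rw [← norm_mul, hrow, norm_neg]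
    _ ≤ ∑ j ∈ univ.erase i, ‖M i j‖ * ‖x j‖ := by
      simpa only [norm_mul] using norm_sum_le (univ.erase i) fun j => M i j * x j

theorem sum_norm_mul_le_of_isMax {x : n → K} {i : n} (hmax : ∀ j, ‖x j‖ ≤ ‖x i‖) :
    ∑ j ∈ univ.erase i, ‖M i j‖ * ‖x j‖ ≤ (∑ j ∈ univ.erase i, ‖M i j‖) * ‖x i‖ := by
  rw [sum_mul]
  exact sum_le_sum fun j _ => mul_le_mul_of_nonneg_left (hmax j) (norm_nonneg _)

theorem norm_diag_le_sum_norm_of_mulVec_eq_zero {x : n → K} {i : n} (hx : M *ᵥ x = 0)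
    (hmax : ∀ j, ‖x j‖ ≤ ‖x i‖) (hxi : x i ≠ 0) :
    ‖M i i‖ ≤ ∑ j ∈ univ.erase i, ‖M i j‖ :=
  le_of_mul_le_mul_right
    ((norm_diag_mul_le_of_mulVec_apply_eq_zero (congrFun hx i)).trans
      (sum_norm_mul_le_of_isMax hmax))
    (norm_pos_iff.mpr hxi)

theorem norm_eq_of_mulVec_eq_zero_of_ne_zero {x : n → K} {i j : n} (hx : M *ᵥ x = 0)
    (hmax : ∀ k, ‖x k‖ ≤ ‖x i‖) (hdom : ∑ k ∈ univ.erase i, ‖M i k‖ ≤ ‖M i i‖)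
    (hMij : M i j ≠ 0) : ‖x j‖ = ‖x i‖ := by
  obtain rfl | hji := eq_or_ne j i
  · rfl
  refine (hmax j).antisymm (not_lt.mp fun hlt => ?_)
  have hstrict : ∑ k ∈ univ.erase i, ‖M i k‖ * ‖x k‖ < (∑ k ∈ univ.erase i, ‖M i k‖) * ‖x i‖ := by
    rw [sum_mul]
    exact sum_lt_sum (fun k _ => mul_le_mul_of_nonneg_left (hmax k) (norm_nonneg _))
      ⟨j, mem_erase.mpr ⟨hji, mem_univ j⟩, mul_lt_mul_of_pos_left hlt (norm_pos_iff.mpr hMij)⟩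
  have hrow := norm_diag_mul_le_of_mulVec_apply_eq_zero (congrFun hx i)
  have hbound := mul_le_mul_of_nonneg_right hdom (norm_nonneg (x i))
  linarith

theorem norm_eq_of_mulVec_eq_zero_of_transGen {x : n → K} {i a : n} (hx : M *ᵥ x = 0)
    (hmax : ∀ k, ‖x k‖ ≤ ‖x i‖) (hdom : ∀ k, ∑ j ∈ univ.erase k, ‖M k j‖ ≤ ‖M k k‖)
    (hpath : Relation.TransGen (fun u v => M v u ≠ 0) a i) : ‖x a‖ = ‖x i‖ := by
  induction hpath using Relation.TransGen.head_induction_on with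
  | single h => exact norm_eq_of_mulVec_eq_zero_of_ne_zero hx hmax (hdom i) h
  | head h _ ih =>
    exact (norm_eq_of_mulVec_eq_zero_of_ne_zero hx (ih ▸ hmax) (hdom _) h).trans ih

theorem IrreduciblyDiagonallyDominant.det_ne_zero (hM : M.IrreduciblyDiagonallyDominant) :
    M.det ≠ 0 := by
  intro hdet
  obtain ⟨x, hx0, hx⟩ := exists_mulVec_eq_zero_iff.mpr hdet
  obtain ⟨s, hs⟩ := hM.exists_strict
  obtain ⟨i, -, hi⟩ := exists_max_image univ (fun k => ‖x k‖) ⟨s, mem_univ s⟩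
  have hmax : ∀ k, ‖x k‖ ≤ ‖x i‖ := fun k => hi k (mem_univ k)
  have hxi : x i ≠ 0 := by
    obtain ⟨k, hk⟩ := Function.ne_iff.mp hx0
    exact norm_pos_iff.mp ((norm_pos_iff.mpr hk).trans_le (hmax k))
  have hxs : ‖x s‖ = ‖x i‖ := by
    obtain rfl | hsi := eq_or_ne s i
    · rfl
    exact norm_eq_of_mulVec_eq_zero_of_transGen hx hmax hM.dominant (hM.irreducible s i hsi)
  have hxs0 : x s ≠ 0 := norm_ne_zero_iff.mp (hxs ▸ norm_ne_zero_iff.mpr hxi)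
  exact (norm_diag_le_sum_norm_of_mulVec_eq_zero hx (hxs ▸ hmax) hxs0).not_gt hs

theorem IrreduciblyDiagonallyDominant.isUnit (hM : M.IrreduciblyDiagonallyDominant) :
    IsUnit M :=
  (isUnit_iff_isUnit_det M).mpr (isUnit_iff_ne_zero.mpr hM.det_ne_zero)

end DiagonallyDominant

section Laplacian

def laplacian (A : Matrix n n ℝ) : Matrix n n ℝ :=
  diagonal (fun i => ∑ j, A i j) - A

variable {A : Matrix n n ℝ} {b : n → ℝ}

theorem laplacian_add_diagonal_apply_ne {i j : n} (hij : i ≠ j) :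
    (laplacian A + diagonal b) i j = -A i j := by
  simp [laplacian, diagonal_apply_ne _ hij]

theorem laplacian_add_diagonal_apply_self (i : n) :
    (laplacian A + diagonal b) i i = ∑ j ∈ univ.erase i, A i j + b i := by
  simp [laplacian, sum_erase_eq_sub (mem_univ i)]

theorem sum_norm_laplacian_add_diagonal_erase (hA : ∀ i j, 0 ≤ A i j) (i : n) :
    ∑ j ∈ univ.erase i, ‖(laplacian A + diagonal b) i j‖ = ∑ j ∈ univ.erase i, A i j :=
  sum_congr rfl fun j hj => by
    rw [laplacian_add_diagonal_apply_ne (ne_of_mem_erase hj).symm, norm_neg,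
      Real.norm_of_nonneg (hA i j)]

theorem norm_laplacian_add_diagonal_apply_self (hA : ∀ i j, 0 ≤ A i j) (hb : ∀ i, 0 ≤ b i)
    (i : n) : ‖(laplacian A + diagonal b) i i‖ = ∑ j ∈ univ.erase i, A i j + b i := by
  rw [laplacian_add_diagonal_apply_self, Real.norm_of_nonneg]
  exact add_nonneg (sum_nonneg fun j _ => hA i j) (hb i)

theorem laplacian_add_diagonal_irreduciblyDiagonallyDominant (hA : ∀ i j, 0 ≤ A i j)
    (hAdiag : ∀ i, A i i = 0) (hb : ∀ i, 0 ≤ b i)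
    (hconn : ∀ i j, i ≠ j → Relation.TransGen (fun u v => 0 < A v u) i j)
    (hbpos : ∃ i, 0 < b i) :
    (laplacian A + diagonal b).IrreduciblyDiagonallyDominant where
  dominant i := by
    rw [sum_norm_laplacian_add_diagonal_erase hA, norm_laplacian_add_diagonal_apply_self hA hb]
    linarith [hb i]
  exists_strict := by
    obtain ⟨i, hi⟩ := hbpos
    refine ⟨i, ?_⟩
    rw [sum_norm_laplacian_add_diagonal_erase hA, norm_laplacian_add_diagonal_apply_self hA hb]
    linarith
  irreducible i j hij := by
    refine Relation.TransGen.mono (fun u v huv => ?_) i j (hconn i j hij)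
    have hvu : v ≠ u := fun h => (h ▸ hAdiag v ▸ huv).false
    rw [laplacian_add_diagonal_apply_ne hvu, neg_ne_zero]
    exact huv.ne'

end Laplacian

end Matrix

theorem lplusB_irreducibly_diagonally_dominant_and_nonsingular_general
    {N : ℕ} (A : Matrix (Fin N) (Fin N) ℝ)
    (hA : ∀ i j, 0 ≤ A i j) (hAdiag : ∀ i, A i i = 0)
    (b : Fin N → ℝ) (hb : ∀ i, 0 ≤ b i)
    (hconn : ∀ i j : Fin N, i ≠ j →
      Relation.TransGen (fun u v : Fin N => 0 < A v u) i j)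
    (hbpos : ∃ i, 0 < b i)
    (L B : Matrix (Fin N) (Fin N) ℝ)
    (hL : L = Matrix.diagonal (fun i => ∑ j, A i j) - A)
    (hB : B = Matrix.diagonal b) :
    (∀ i j, i ≠ j → (L + B) i j ≤ 0) ∧
    (∀ i, ∑ j ∈ Finset.univ.erase i, |(L + B) i j| ≤ |(L + B) i i|) ∧
    (∃ i, ∑ j ∈ Finset.univ.erase i, |(L + B) i j| < |(L + B) i i|) ∧
    (∀ i j : Fin N, i ≠ j →
      Relation.TransGen (fun u v : Fin N => (L + B) v u ≠ 0) i j) ∧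
    IsUnit (L + B) := by
  obtain rfl : L = laplacian A := hL
  subst hB
  have hidd := laplacian_add_diagonal_irreduciblyDiagonallyDominant hA hAdiag hb hconn hbpos
  refine ⟨fun i j hij => ?_, ?_, ?_, hidd.irreducible, hidd.isUnit⟩
  · rw [laplacian_add_diagonal_apply_ne hij, neg_nonpos]
    exact hA i j
  · simpa only [Real.norm_eq_abs] using hidd.dominant
  · simpa only [Real.norm_eq_abs] using hidd.exists_strict

/-- If the weighted digraph with adjacency matrix `A` is strongly
connected and at least one pinning gain `b i` is strictly positive, then `L + B` is an
irreducibly diagonally dominant matrix with nonpositive off-diagonal entries; in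
particular `L + B` is nonsingular. -/
theorem lplusB_irreducibly_diagonally_dominant_and_nonsingular
    {N : ℕ} (hN : 0 < N) (A : Matrix (Fin N) (Fin N) ℝ)
    (hA : ∀ i j, 0 ≤ A i j) (hAdiag : ∀ i, A i i = 0)
    (b : Fin N → ℝ) (hb : ∀ i, 0 ≤ b i)
    (hconn : ∀ i j : Fin N, i ≠ j →
      Relation.TransGen (fun u v : Fin N => 0 < A v u) i j)
    (hbpos : ∃ i, 0 < b i)
    (L B : Matrix (Fin N) (Fin N) ℝ)
    (hL : L = Matrix.diagonal (fun i => ∑ j, A i j) - A)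
    (hB : B = Matrix.diagonal b) :
    (∀ i j, i ≠ j → (L + B) i j ≤ 0) ∧
    (∀ i, ∑ j ∈ Finset.univ.erase i, |(L + B) i j| ≤ |(L + B) i i|) ∧
    (∃ i, ∑ j ∈ Finset.univ.erase i, |(L + B) i j| < |(L + B) i i|) ∧
    (∀ i j : Fin N, i ≠ j →
      Relation.TransGen (fun u v : Fin N => (L + B) v u ≠ 0) i j) ∧
    IsUnit (L + B) :=
  lplusB_irreducibly_diagonally_dominant_and_nonsingular_general A hA hAdiag b hb hconn hbpos L B hL
    hB
end

section
/- (Lemma 1, positivity part.) Suppose the weighted digraph with adjacency matrix A is strongly connected, at least one pinning gain b_i is strictly positive, and L + B is nonsingular. Define q = (q_1,…,q_N)ᵀ = (L + B)^{−1}·𝟙, where 𝟙 = (1,…,1)ᵀ. Then every entry q_i is strictly positive, so that P = diag(1/q_1, …, 1/q_N) is a positive definite diagonal matrix. -/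
open Matrix Finset

/-- **Lemma 1, positivity part.** Under strong connectivity, a positive
pinning gain and nonsingularity of `L + B`, the vector `q = (L + B)⁻¹ 𝟙` has strictly
positive entries, so `P = diag (1 / q i)` is a positive definite diagonal matrix. -/
theorem q_entries_positive
    {N : ℕ} (hN : 0 < N) (A : Matrix (Fin N) (Fin N) ℝ)
    (hA : ∀ i j, 0 ≤ A i j) (hAdiag : ∀ i, A i i = 0)
    (b : Fin N → ℝ) (hb : ∀ i, 0 ≤ b i)
    (hconn : ∀ i j : Fin N, i ≠ j →
      Relation.TransGen (fun u v : Fin N => 0 < A v u) i j)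
    (hbpos : ∃ i, 0 < b i)
    (L B : Matrix (Fin N) (Fin N) ℝ)
    (hL : L = Matrix.diagonal (fun i => ∑ j, A i j) - A)
    (hB : B = Matrix.diagonal b)
    (hunit : IsUnit (L + B))
    (q : Fin N → ℝ) (hq : q = (L + B)⁻¹ *ᵥ (fun _ => 1)) :
    (∀ i, 0 < q i) ∧ (Matrix.diagonal fun i => (q i)⁻¹).PosDef := by
  have hdet : IsUnit (L + B).det := (Matrix.isUnit_iff_isUnit_det _).mp hunit
  have heq : (L + B) *ᵥ q = fun _ => 1 := by
    rw [hq, Matrix.mulVec_mulVec, Matrix.mul_nonsing_inv _ hdet, Matrix.one_mulVec]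
  obtain ⟨i0, -, hi0⟩ := Finset.exists_min_image Finset.univ q
    ⟨⟨0, hN⟩, Finset.mem_univ _⟩
  have hmle : ∀ j, q i0 ≤ q j := fun j => hi0 j (Finset.mem_univ j)
  have hrow : ((L + B) *ᵥ q) i0 = 1 := congrFun heq i0
  have expand : ((L + B) *ᵥ q) i0
      = (∑ j, A i0 j) * q i0 + b i0 * q i0 - ∑ j, A i0 j * q j := by
    subst hL hB
    simp only [Matrix.add_mulVec, Matrix.sub_mulVec, Matrix.mulVec,
      dotProduct, Matrix.sub_apply, Matrix.add_apply, Matrix.diagonal_apply, ite_mul, zero_mul,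
      sub_mul, add_mul, Finset.sum_sub_distrib, Finset.sum_add_distrib,
      Finset.sum_ite_eq, Finset.mem_univ, if_true, Pi.add_apply, Pi.sub_apply]
    ring
  have hsum : (∑ j, A i0 j) * q i0 ≤ ∑ j, A i0 j * q j := by
    rw [Finset.sum_mul]
    exact Finset.sum_le_sum fun j _ =>
      mul_le_mul_of_nonneg_left (hmle j) (hA i0 j)
  have key : 1 ≤ b i0 * q i0 := by
    rw [expand] at hrow; linarith
  have hm : 0 < q i0 := by
    by_contra h
    push_neg at h
    have : b i0 * q i0 ≤ 0 := mul_nonpos_of_nonneg_of_nonpos (hb i0) h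
    linarith
  have hpos : ∀ i, 0 < q i := fun i => lt_of_lt_of_le hm (hmle i)
  exact ⟨hpos, Matrix.posDef_diagonal_iff.mpr fun i => inv_pos.mpr (hpos i)⟩
end

section
/- Let δ̄ > 0 and δ̲ > 0, and let e, ρ : ℝ → ℝ be functions differentiable at a point t with ρ(t) > 0 and −δ̲ < e(t)/ρ(t) < δ̄. Then the transformed error ε(s) = (1/2)·ln((δ̲ + e(s)/ρ(s))/(δ̄ − e(s)/ρ(s))) is differentiable at t with derivative ε̇(t) = (1/(2ρ(t)))·(1/(δ̲ + e(t)/ρ(t)) + 1/(δ̄ − e(t)/ρ(t)))·(ė(t) − e(t)·ρ̇(t)/ρ(t)). -/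
open Topology

theorem Real.hasDerivAt_log_add_div_sub {a b x : ℝ} (ha : a + x ≠ 0) (hb : b - x ≠ 0) :
    HasDerivAt (fun y => Real.log ((a + y) / (b - y))) (1 / (a + x) + 1 / (b - x)) x := by
  have hnum : HasDerivAt (fun y => Real.log (a + y)) (1 / (a + x)) x :=
    ((hasDerivAt_id x).const_add a).log ha
  have hden : HasDerivAt (fun y => Real.log (b - y)) (-1 / (b - x)) x :=
    ((hasDerivAt_id x).const_sub b).log hb
  have hsplit : (fun y => Real.log (a + y) - Real.log (b - y))
      =ᶠ[𝓝 x] fun y => Real.log ((a + y) / (b - y)) := by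
    filter_upwards [(continuous_const.add continuous_id).continuousAt.eventually_ne ha,
      (continuous_const.sub continuous_id).continuousAt.eventually_ne hb] with y hay hby
    exact (Real.log_div hay hby).symm
  exact ((hnum.sub hden).congr_of_eventuallyEq hsplit.symm).congr_deriv (by ring)

theorem transformed_error_hasDerivAt_general
    (δbar δlow : ℝ)
    (e ρ : ℝ → ℝ) (t edot ρdot : ℝ)
    (he : HasDerivAt e edot t) (hρ : HasDerivAt ρ ρdot t)
    (hρpos : 0 < ρ t)
    (hlb : -δlow < e t / ρ t) (hub : e t / ρ t < δbar) :
    HasDerivAt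
      (fun s => (1 / 2) * Real.log ((δlow + e s / ρ s) / (δbar - e s / ρ s)))
      ((1 / (2 * ρ t)) * (1 / (δlow + e t / ρ t) + 1 / (δbar - e t / ρ t)) *
        (edot - e t * ρdot / ρ t)) t := by
  have hquot : HasDerivAt (fun s => e s / ρ s) ((edot * ρ t - e t * ρdot) / ρ t ^ 2) t :=
    he.div hρ hρpos.ne'
  have hlog := (Real.hasDerivAt_log_add_div_sub (a := δlow) (b := δbar)
    (by linarith : δlow + e t / ρ t ≠ 0) (by linarith : δbar - e t / ρ t ≠ 0)).comp t hquot
  refine (hlog.const_mul (1 / 2)).congr_deriv ?_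
  generalize 1 / (δlow + e t / ρ t) + 1 / (δbar - e t / ρ t) = S
  field_simp

/-- If `e` and `ρ` are differentiable at `t` with `ρ(t) > 0` and
`−δ̲ < e(t)/ρ(t) < δ̄`, then the transformed error
`ε(s) = (1/2)·ln((δ̲ + e(s)/ρ(s))/(δ̄ − e(s)/ρ(s)))` is differentiable at `t` with
`ε̇(t) = (1/(2ρ(t)))·(1/(δ̲ + e(t)/ρ(t)) + 1/(δ̄ − e(t)/ρ(t)))·(ė(t) − e(t)ρ̇(t)/ρ(t))`. -/
theorem transformed_error_hasDerivAt
    (δbar δlow : ℝ) (hδbar : 0 < δbar) (hδlow : 0 < δlow)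
    (e ρ : ℝ → ℝ) (t edot ρdot : ℝ)
    (he : HasDerivAt e edot t) (hρ : HasDerivAt ρ ρdot t)
    (hρpos : 0 < ρ t)
    (hlb : -δlow < e t / ρ t) (hub : e t / ρ t < δbar) :
    HasDerivAt
      (fun s => (1 / 2) * Real.log ((δlow + e s / ρ s) / (δbar - e s / ρ s)))
      ((1 / (2 * ρ t)) * (1 / (δlow + e t / ρ t) + 1 / (δbar - e t / ρ t)) *
        (edot - e t * ρdot / ρ t)) t :=
  transformed_error_hasDerivAt_general δbar δlow e ρ t edot ρdot he hρ hρpos hlb hub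
end

section
/- Let β₁ > 0 and β₂ ≥ 0, and let V : [0, ∞) → ℝ be a differentiable function with V(t) ≥ 0 for all t ≥ 0 that satisfies the differential inequality V̇(t) ≤ −β₁·V(t) + β₂·√(V(t)) for all t ≥ 0. Then for every t ≥ 0, √(V(t)) ≤ √(V(0)) + β₂/β₁. -/
/-- If `V ≥ 0` is differentiable on `[0, ∞)` and satisfies
`V̇ ≤ −β₁ V + β₂ √V` there (with `β₁ > 0`, `β₂ ≥ 0`), then
`√(V(t)) ≤ √(V(0)) + β₂/β₁` for all `t ≥ 0`. -/
theorem sqrt_lyapunov_bound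
    (β₁ β₂ : ℝ) (hβ₁ : 0 < β₁) (hβ₂ : 0 ≤ β₂)
    (V V' : ℝ → ℝ)
    (hdiff : ∀ t, 0 ≤ t → HasDerivAt V (V' t) t)
    (hnonneg : ∀ t, 0 ≤ t → 0 ≤ V t)
    (hineq : ∀ t, 0 ≤ t → V' t ≤ -β₁ * V t + β₂ * Real.sqrt (V t)) :
    ∀ t, 0 ≤ t → Real.sqrt (V t) ≤ Real.sqrt (V 0) + β₂ / β₁ := by
  intro t ht
  set M : ℝ := Real.sqrt (V 0) + β₂ / β₁ with hM
  have hM0 : 0 ≤ M := add_nonneg (Real.sqrt_nonneg _) (div_nonneg hβ₂ hβ₁.le)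
  have hMb : β₂ ≤ β₁ * M := by
    have h1 : β₂ / β₁ ≤ M := le_add_of_nonneg_left (Real.sqrt_nonneg _)
    calc β₂ = β₁ * (β₂ / β₁) := by field_simp
    _ ≤ β₁ * M := by nlinarith
  have key : ∀ ε > 0, V t ≤ M ^ 2 + ε := by
    intro ε hε
    have h0 : V 0 ≤ M ^ 2 + ε := by
      have h1 : V 0 = Real.sqrt (V 0) ^ 2 := (Real.sq_sqrt (hnonneg 0 le_rfl)).symm
      have h2 : Real.sqrt (V 0) ≤ M := le_add_of_nonneg_right (div_nonneg hβ₂ hβ₁.le)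
      nlinarith [Real.sqrt_nonneg (V 0)]
    have main := image_le_of_deriv_right_lt_deriv_boundary (f := V) (f' := V') (a := 0) (b := t)
      (B := fun _ => M ^ 2 + ε) (B' := fun _ => 0)
      (fun x hx => ((hdiff x hx.1).continuousAt).continuousWithinAt)
      (fun x hx => ((hdiff x hx.1).hasDerivWithinAt))
      h0 (fun _ => hasDerivAt_const _ _)
      (by
        intro x hx hVx
        have hx0 : 0 ≤ x := hx.1
        have hVnn : 0 ≤ V x := hnonneg x hx0
        have hVx' : V x = M ^ 2 + ε := hVx
        have hs : Real.sqrt (V x) ^ 2 = V x := Real.sq_sqrt hVnn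
        set s : ℝ := Real.sqrt (V x) with hsdef
        have hsn : 0 ≤ s := Real.sqrt_nonneg _
        have hgt : M < s := by nlinarith
        have hd := hineq x hx0
        have hb : -β₁ * V x + β₂ * s = s * (β₂ - β₁ * s) := by
          linear_combination (β₁ : ℝ) * hs
        have hneg : β₂ - β₁ * s < 0 := by nlinarith
        have hsp : 0 < s := lt_of_le_of_lt hM0 hgt
        show V' x < 0
        calc V' x ≤ s * (β₂ - β₁ * s) := by linarith
        _ < 0 := mul_neg_of_pos_of_neg hsp hneg)
    simpa using main (Set.right_mem_Icc.mpr ht)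
  have hVt : V t ≤ M ^ 2 := le_of_forall_pos_le_add key
  calc Real.sqrt (V t) ≤ Real.sqrt (M ^ 2) := Real.sqrt_le_sqrt hVt
  _ = M := by rw [Real.sqrt_sq hM0]
end
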